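/- arXiv:2603.05107 — 2 statements merged into one kernel-verified Lean document; each statement's English description precedes it below -/
import Mathlib

section
/- Let a_1 < a_2 < … < a_{2n} be positive integers with A = (1/2)·Σ_{j=1}^{2n} a_j, and define 2n jobs with processing times p_{2k+1} = 2kA + a_{2k+1} and p_{2k+2} = 2kA + a_{2k+2} for k = 0,…,n−1. In every schedule of these 2n jobs on 2 identical machines (both of speed 1) that minimizes Σ_j C_j, each machine processes exactly n jobs, and for every k = 1,…,n the two jobs occupying position k (counted from the start) on the two machines are exactly J_{2k−1} and J_{2k}. -/
/-- A schedule of a finite set of jobs `J` on `m` uniform machines: each job gets a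
machine and a (1-based) position, positions on each machine are pairwise distinct and
the occupied positions on each machine are exactly `1, …, η_i`. -/
structure Schedule (J : Type) (m : ℕ) where
  mach : J → Fin m
  pos : J → ℕ
  pos_pos : ∀ j, 1 ≤ pos j
  inj : ∀ j j', mach j = mach j' → pos j = pos j' → j = j'
  contiguous : ∀ j, 2 ≤ pos j → ∃ j', mach j' = mach j ∧ pos j' = pos j - 1

namespace Schedule

variable {J : Type} {m : ℕ} [Fintype J]

/-- Number `η_i` of jobs scheduled on machine `i`. -/
def load (σ : Schedule J m) (i : Fin m) : ℕ :=
  (Finset.univ.filter fun j => σ.mach j = i).card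

/-- Completion time of job `j`: jobs on a machine of speed `V i` are processed
consecutively from time 0 without idle time. -/
noncomputable def compl (σ : Schedule J m) (p : J → ℝ) (V : Fin m → ℝ) (j : J) : ℝ :=
  (∑ j' ∈ Finset.univ.filter
      (fun j' => σ.mach j' = σ.mach j ∧ σ.pos j' ≤ σ.pos j), p j') / V (σ.mach j)

/-- Total completion time `Σ_j C_j` of a schedule. -/
noncomputable def totalC (σ : Schedule J m) (p : J → ℝ) (V : Fin m → ℝ) : ℝ :=
  ∑ j, σ.compl p V j

/-- Positional weight of job `j`: `(η_i + 1 - k)/V_i` where `k` is the position of `j`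
on its machine `M_i`, which holds `η_i` jobs. -/
noncomputable def pw (σ : Schedule J m) (V : Fin m → ℝ) (j : J) : ℝ :=
  ((σ.load (σ.mach j) : ℝ) + 1 - (σ.pos j : ℝ)) / V (σ.mach j)

end Schedule

/-- Processing times of the Even-Odd-Partition reduction: with 0-based indexing,
`p_j = 2·⌊j/2⌋·A + a_j`, i.e. `p_{2k+1} = 2kA + a_{2k+1}` and `p_{2k+2} = 2kA + a_{2k+2}`
in the paper's 1-based indexing. -/
noncomputable def procEOP (n A : ℕ) (a : Fin (2 * n) → ℕ) : Fin (2 * n) → ℝ :=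
  fun j => ((2 * ((j : ℕ) / 2) * A + a j : ℕ) : ℝ)

/- ### Auxiliary lemmas -/

/-- A `Finset ℕ` of positive numbers closed under predecessor is `Icc 1 card`. -/
lemma downclosed_eq_Icc (S : Finset ℕ) (h1 : ∀ t ∈ S, 1 ≤ t)
    (h2 : ∀ t ∈ S, 2 ≤ t → t - 1 ∈ S) : S = Finset.Icc 1 S.card := by
  have aux : ∀ d t, t ∈ S → 1 ≤ t - d → t - d ∈ S := by
    intro d
    induction d with
    | zero => intro t ht _; simpa using ht
    | succ d ih =>
      intro t ht h1'
      have h2' : 1 ≤ t - d := by omega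
      have h3 := ih t ht h2'
      have h4 := h2 _ h3 (by omega)
      have h5 : t - d - 1 = t - (d+1) := by omega
      rwa [h5] at h4
  rcases S.eq_empty_or_nonempty with rfl | hS
  · simp
  · set M := S.max' hS with hM
    have hMS : M ∈ S := S.max'_mem hS
    have hsub : S = Finset.Icc 1 M := by
      apply Finset.Subset.antisymm
      · intro t ht
        simp only [Finset.mem_Icc]
        exact ⟨h1 t ht, S.le_max' t ht⟩
      · intro t ht
        simp only [Finset.mem_Icc] at ht
        have := aux (M - t) M hMS (by omega)
        have h6 : M - (M - t) = t := by omega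
        rwa [h6] at this
    have hcard : S.card = M := by rw [hsub, Nat.card_Icc]; omega
    rw [hcard]; exact hsub

namespace Schedule
variable {J : Type} {m : ℕ} [Fintype J]

/-- the set of occupied positions on machine `i` -/
noncomputable def posSet (σ : Schedule J m) (i : Fin m) : Finset ℕ :=
  (Finset.univ.filter fun j => σ.mach j = i).image σ.pos

lemma posSet_eq (σ : Schedule J m) (i : Fin m) : σ.posSet i = Finset.Icc 1 (σ.load i) := by
  have hinj : Set.InjOn σ.pos (Finset.univ.filter fun j => σ.mach j = i) := by
    intro x hx y hy hxy
    simp only [Finset.coe_filter, Set.mem_setOf_eq] at hx hy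
    exact σ.inj x y (hx.2.trans hy.2.symm) hxy
  have hcard : (σ.posSet i).card = σ.load i := by
    rw [posSet, Finset.card_image_of_injOn hinj]; rfl
  rw [← hcard]
  apply downclosed_eq_Icc
  · intro t ht
    simp only [posSet, Finset.mem_image, Finset.mem_filter] at ht
    obtain ⟨j, hj, rfl⟩ := ht
    exact σ.pos_pos j
  · intro t ht h2t
    simp only [posSet, Finset.mem_image, Finset.mem_filter] at ht ⊢
    obtain ⟨j, hj, rfl⟩ := ht
    obtain ⟨j', hj'm, hj'p⟩ := σ.contiguous j h2t
    exact ⟨j', ⟨Finset.mem_univ _, by rw [hj'm, hj.2]⟩, hj'p⟩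

lemma pos_le_load (σ : Schedule J m) (j : J) : σ.pos j ≤ σ.load (σ.mach j) := by
  have : σ.pos j ∈ σ.posSet (σ.mach j) := by
    simp only [posSet, Finset.mem_image, Finset.mem_filter]
    exact ⟨j, ⟨Finset.mem_univ _, rfl⟩, rfl⟩
  rw [posSet_eq] at this
  exact (Finset.mem_Icc.mp this).2

lemma exists_pos (σ : Schedule J m) (i : Fin m) (t : ℕ) (h1 : 1 ≤ t) (h2 : t ≤ σ.load i) :
    ∃ j, σ.mach j = i ∧ σ.pos j = t := by
  have : t ∈ σ.posSet i := by rw [posSet_eq]; exact Finset.mem_Icc.mpr ⟨h1, h2⟩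
  simp only [posSet, Finset.mem_image, Finset.mem_filter] at this
  obtain ⟨j, hj, rfl⟩ := this
  exact ⟨j, hj.2, rfl⟩

/-- count of jobs on `j`'s machine at position ≥ pos j -/
lemma card_ge_pos (σ : Schedule J m) (j' : J) :
    (Finset.univ.filter fun j => σ.mach j = σ.mach j' ∧ σ.pos j' ≤ σ.pos j).card
      = σ.load (σ.mach j') + 1 - σ.pos j' := by
  have hinj : Set.InjOn σ.pos
      (Finset.univ.filter fun j => σ.mach j = σ.mach j' ∧ σ.pos j' ≤ σ.pos j) := by
    intro x hx y hy hxy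
    simp only [Finset.coe_filter, Set.mem_setOf_eq] at hx hy
    exact σ.inj x y (hx.2.1.trans hy.2.1.symm) hxy
  rw [← Finset.card_image_of_injOn hinj]
  have : (Finset.univ.filter fun j => σ.mach j = σ.mach j' ∧ σ.pos j' ≤ σ.pos j).image σ.pos
      = Finset.Icc (σ.pos j') (σ.load (σ.mach j')) := by
    apply Finset.Subset.antisymm
    · intro t ht
      simp only [Finset.mem_image, Finset.mem_filter] at ht
      obtain ⟨x, hx, rfl⟩ := ht
      refine Finset.mem_Icc.mpr ⟨hx.2.2, ?_⟩
      rw [← hx.2.1]; exact σ.pos_le_load x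
    · intro t ht
      rw [Finset.mem_Icc] at ht
      obtain ⟨x, hxm, hxp⟩ := σ.exists_pos (σ.mach j') t
        (le_trans (σ.pos_pos j') ht.1) ht.2
      simp only [Finset.mem_image, Finset.mem_filter]
      exact ⟨x, ⟨Finset.mem_univ _, hxm, by omega⟩, hxp⟩
  rw [this, Nat.card_Icc]

/-- main formula: total completion time via positional weights -/
lemma totalC_eq (σ : Schedule J m) (p : J → ℝ) :
    σ.totalC p (fun _ => 1)
      = ∑ j, ((σ.load (σ.mach j) + 1 - σ.pos j : ℕ) : ℝ) * p j := by
  simp only [totalC, compl, div_one]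
  rw [Finset.sum_comm' (s := Finset.univ) (t := fun j => Finset.univ.filter
    (fun j' => σ.mach j' = σ.mach j ∧ σ.pos j' ≤ σ.pos j))
    (t' := Finset.univ) (s' := fun j' => Finset.univ.filter
    (fun j => σ.mach j = σ.mach j' ∧ σ.pos j' ≤ σ.pos j))]
  · apply Finset.sum_congr rfl
    intro j' _
    rw [Finset.sum_const, ← card_ge_pos, nsmul_eq_mul]
  · intro x y
    simp only [Finset.mem_univ, Finset.mem_filter, true_and]
    exact ⟨fun h => ⟨⟨h.1.symm, h.2⟩, trivial⟩, fun h => ⟨h.1.1.symm, h.1.2⟩⟩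

end Schedule

/-- minimal possible sum of `k` values of a multiplicity-≤2 positive function -/
def minSum (k : ℕ) : ℕ := ∑ m ∈ Finset.range k, (m / 2 + 1)

lemma lemA (N : ℕ) (f : ℕ → ℕ) (hf1 : ∀ j < N, 1 ≤ f j)
    (hf2 : ∀ t, ((Finset.range N).filter fun j => f j = t).card ≤ 2) :
    ∀ k : ℕ, ∀ S : Finset ℕ, S ⊆ Finset.range N → S.card = k →
      minSum k ≤ ∑ j ∈ S, f j := by
  intro k
  induction k with
  | zero => intro S _ hc; simp [minSum]
  | succ k ih =>
    intro S hSN hc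
    have hne : S.Nonempty := Finset.card_pos.mp (by omega)
    obtain ⟨b, hbS, hb⟩ := Finset.exists_max_image S f hne
    have hmem : ∀ x ∈ S, f x ∈ Finset.Icc 1 (f b) := by
      intro x hx
      exact Finset.mem_Icc.mpr ⟨hf1 x (Finset.mem_range.mp (hSN hx)), hb x hx⟩
    have hcard : S.card ≤ 2 * f b := by
      have h1 : S.card = ∑ t ∈ Finset.Icc 1 (f b), (S.filter fun x => f x = t).card :=
        Finset.card_eq_sum_card_fiberwise hmem
      have h2 : ∀ t ∈ Finset.Icc 1 (f b), (S.filter fun x => f x = t).card ≤ 2 := by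
        intro t _
        exact le_trans (Finset.card_le_card (Finset.filter_subset_filter _ hSN)) (hf2 t)
      calc S.card ≤ ∑ t ∈ Finset.Icc 1 (f b), 2 := h1 ▸ Finset.sum_le_sum h2
        _ = 2 * f b := by rw [Finset.sum_const, Nat.card_Icc, smul_eq_mul]; omega
    have hfb : k / 2 + 1 ≤ f b := by omega
    have herase := ih (S.erase b) (le_trans (Finset.erase_subset _ _) hSN)
      (by rw [Finset.card_erase_of_mem hbS, hc]; omega)
    have hsplit : ∑ j ∈ S, f j = f b + ∑ j ∈ S.erase b, f j :=
      (Finset.add_sum_erase _ _ hbS).symm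
    rw [hsplit, minSum, Finset.sum_range_succ]
    have : minSum k = ∑ m ∈ Finset.range k, (m / 2 + 1) := rfl
    omega

lemma lemB (n : ℕ) (i : ℕ) (hi : i ≤ 2 * n) :
    ∑ j ∈ Finset.Ico i (2 * n), (n - j / 2) = minSum (2 * n - i) := by
  rcases Nat.eq_or_lt_of_le hi with rfl | hlt
  · simp [minSum]
  · have ih := lemB n (i + 1) (by omega)
    rw [Finset.sum_eq_sum_Ico_succ_bot hlt, ih]
    have h1 : 2 * n - i = (2 * n - (i+1)) + 1 := by omega
    rw [h1]
    show _ = ∑ m ∈ Finset.range (2 * n - (i+1) + 1), (m / 2 + 1)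
    rw [Finset.sum_range_succ]
    have : minSum (2 * n - (i+1)) = ∑ m ∈ Finset.range (2*n - (i+1)), (m / 2 + 1) := rfl
    omega
termination_by 2 * n - i

lemma lemC (N : ℕ) (q : ℕ → ℝ) (f c : ℕ → ℕ)
    (hq : ∀ i, i + 1 < N → q i < q (i + 1)) (hq0 : ∀ i < N, 0 < q i)
    (hT : ∀ i, ∑ j ∈ Finset.Ico i N, c j ≤ ∑ j ∈ Finset.Ico i N, f j)
    (i : ℕ) (hi : i ≤ N) :
    (((∑ j ∈ Finset.Ico i N, f j : ℕ) : ℝ) - ((∑ j ∈ Finset.Ico i N, c j : ℕ) : ℝ)) * q i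
        + ∑ j ∈ Finset.Ico i N, (c j : ℝ) * q j ≤ ∑ j ∈ Finset.Ico i N, (f j : ℝ) * q j
    ∧ ((∑ j ∈ Finset.Ico i N, (f j : ℝ) * q j ≤ ∑ j ∈ Finset.Ico i N, (c j : ℝ) * q j)
        → ∀ j ∈ Finset.Ico i N, f j = c j) := by
  rcases Nat.eq_or_lt_of_le hi with rfl | hlt
  · simp
  · obtain ⟨IH1, IH2⟩ := lemC N q f c hq hq0 hT (i + 1) (by omega)
    have hqi : 0 < q i := hq0 i hlt
    rw [Finset.sum_eq_sum_Ico_succ_bot hlt (fun j => f j),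
        Finset.sum_eq_sum_Ico_succ_bot hlt (fun j => c j),
        Finset.sum_eq_sum_Ico_succ_bot hlt (fun j => (f j : ℝ) * q j),
        Finset.sum_eq_sum_Ico_succ_bot hlt (fun j => (c j : ℝ) * q j)]
    set Tf := ∑ j ∈ Finset.Ico (i+1) N, f j with hTf
    set Tc := ∑ j ∈ Finset.Ico (i+1) N, c j with hTc
    set Df := ∑ j ∈ Finset.Ico (i+1) N, (f j : ℝ) * q j with hDf
    set Dc := ∑ j ∈ Finset.Ico (i+1) N, (c j : ℝ) * q j with hDc
    have hTle : Tc ≤ Tf := hT (i+1)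
    have key : ((Tf : ℝ) - Tc) * q i ≤ ((Tf : ℝ) - Tc) * q (i+1) ∧
        (((Tf : ℝ) - Tc) * q i = ((Tf : ℝ) - Tc) * q (i+1) → Tf = Tc ∨ i + 1 = N) := by
      rcases Nat.lt_or_ge (i+1) N with h | h
      · have hqq := hq i h
        constructor
        · apply mul_le_mul_of_nonneg_left (le_of_lt hqq)
          have : (Tc : ℝ) ≤ Tf := by exact_mod_cast hTle
          linarith
        · intro heq
          left
          by_contra hne
          have h1 : (0 : ℝ) < (Tf : ℝ) - Tc := by
            have : Tc < Tf := lt_of_le_of_ne hTle (fun h2 => hne h2.symm)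
            have : (Tc : ℝ) < Tf := by exact_mod_cast this
            linarith
          nlinarith
      · have hempty : Finset.Ico (i+1) N = ∅ := by
          apply Finset.Ico_eq_empty; omega
        have : Tf = 0 := by rw [hTf, hempty, Finset.sum_empty]
        have : Tc = 0 := by rw [hTc, hempty, Finset.sum_empty]
        constructor
        · simp_all
        · intro _; right; omega
    constructor
    · push_cast
      have h1 : ((Tf : ℝ) - Tc) * q (i+1) + Dc ≤ Df := by
        have := IH1; push_cast at this; linarith
      have h2 := key.1
      nlinarith
    · intro hle
      have h1 : ((Tf : ℝ) - Tc) * q (i+1) + Dc ≤ Df := by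
        have := IH1; push_cast at this; linarith
      have hTi : c i + Tc ≤ f i + Tf := by
        have := hT i
        rw [Finset.sum_eq_sum_Ico_succ_bot hlt (fun j => f j),
            Finset.sum_eq_sum_Ico_succ_bot hlt (fun j => c j)] at this
        rw [hTf, hTc]
        omega
      have hTiR : ((c i : ℝ) + Tc) ≤ (f i : ℝ) + Tf := by exact_mod_cast hTi
      have hA : ((f i : ℝ) - c i) * q i + ((Tf : ℝ) - Tc) * q (i+1) ≤ 0 := by
        nlinarith
      have hB : ((f i : ℝ) - c i) * q i + ((Tf : ℝ) - Tc) * q i ≤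
          ((f i : ℝ) - c i) * q i + ((Tf : ℝ) - Tc) * q (i+1) := by linarith [key.1]
      have hC : 0 ≤ ((f i : ℝ) - c i + ((Tf : ℝ) - Tc)) * q i := by
        apply mul_nonneg _ (le_of_lt hqi)
        linarith
      have hall : ((f i : ℝ) - c i + ((Tf : ℝ) - Tc)) * q i = 0 := by nlinarith
      have hsum0 : (f i : ℝ) - c i + ((Tf : ℝ) - Tc) = 0 := by
        rcases mul_eq_zero.mp hall with h | h
        · exact h
        · exact absurd h (ne_of_gt hqi)
      have hfieq : f i + Tf = c i + Tc := by
        have : (f i : ℝ) + Tf = (c i : ℝ) + Tc := by linarith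
        exact_mod_cast this
      have heq2 : ((Tf : ℝ) - Tc) * q i = ((Tf : ℝ) - Tc) * q (i+1) := by
        nlinarith
      have hTfc : Tf = Tc := by
        rcases key.2 heq2 with h | h
        · exact h
        · have : Finset.Ico (i+1) N = ∅ := by apply Finset.Ico_eq_empty; omega
          rw [hTf, hTc, this]; simp
      have hfi : f i = c i := by omega
      have hDle : Df ≤ Dc := by
        have : (f i : ℝ) * q i = (c i : ℝ) * q i := by rw [hfi]
        linarith
      intro j hj
      rw [Finset.mem_Ico] at hj
      rcases Nat.eq_or_lt_of_le hj.1 with rfl | hjgt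
      · exact hfi
      · exact IH2 hDle j (Finset.mem_Ico.mpr ⟨hjgt, hj.2⟩)
termination_by N - i

/-- The canonical SPT schedule: job `j` on machine `j % 2` at position `j / 2 + 1`. -/
def canonSched (n : ℕ) : Schedule (Fin (2 * n)) 2 where
  mach j := ⟨(j : ℕ) % 2, Nat.mod_lt _ (by norm_num)⟩
  pos j := (j : ℕ) / 2 + 1
  pos_pos j := Nat.le_add_left 1 _
  inj j j' h1 h2 := by
    have h3 : (j : ℕ) % 2 = (j' : ℕ) % 2 := congrArg Fin.val h1
    have h4 : (j : ℕ) / 2 + 1 = (j' : ℕ) / 2 + 1 := h2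
    apply Fin.ext
    omega
  contiguous j h := by
    have h4 : 2 ≤ (j : ℕ) / 2 + 1 := h
    have hj : 2 ≤ (j : ℕ) := by omega
    have hlt : (j : ℕ) - 2 < 2 * n := by omega
    refine ⟨⟨(j : ℕ) - 2, hlt⟩, Fin.ext ?_, ?_⟩
    · show ((j : ℕ) - 2) % 2 = (j : ℕ) % 2
      omega
    · show ((j : ℕ) - 2) / 2 + 1 = (j : ℕ) / 2 + 1 - 1
      omega

lemma canonSched_mach (n : ℕ) (j : Fin (2 * n)) :
    ((canonSched n).mach j : ℕ) = (j : ℕ) % 2 := rfl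

lemma canonSched_pos (n : ℕ) (j : Fin (2 * n)) :
    (canonSched n).pos j = (j : ℕ) / 2 + 1 := rfl

lemma canonSched_load (n : ℕ) (i : Fin 2) : (canonSched n).load i = n := by
  rw [Schedule.load]
  rw [Finset.card_bij' (fun (j : Fin (2*n)) _ => (⟨(j : ℕ) / 2, by omega⟩ : Fin n))
    (fun (k : Fin n) _ => (⟨2 * (k : ℕ) + (i : ℕ), by omega⟩ : Fin (2*n)))
    (fun a ha => Finset.mem_univ _)
    (fun a ha => by
      simp only [Finset.mem_filter, Finset.mem_univ, true_and]
      apply Fin.ext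
      show (2 * (a : ℕ) + (i : ℕ)) % 2 = (i : ℕ)
      omega)
    (fun a ha => by
      simp only [Finset.mem_filter, Finset.mem_univ, true_and] at ha
      have h2 : ((canonSched n).mach a : ℕ) = (i : ℕ) := congrArg Fin.val ha
      rw [canonSched_mach] at h2
      apply Fin.ext
      show 2 * ((a : ℕ) / 2) + (i : ℕ) = (a : ℕ)
      omega)
    (fun a ha => by
      apply Fin.ext
      show (2 * (a : ℕ) + (i : ℕ)) / 2 = (a : ℕ)
      omega)]
  exact Finset.card_univ.trans (Fintype.card_fin n)


/-- ℕ-indexed positional weight of schedule `σ` -/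
def natW (n : ℕ) (σ : Schedule (Fin (2*n)) 2) (i : ℕ) : ℕ :=
  if h : i < 2*n then σ.load (σ.mach ⟨i,h⟩) + 1 - σ.pos ⟨i,h⟩ else 1

/-- canonical weights `n, n, n-1, n-1, …, 1, 1` -/
def natC (n : ℕ) (i : ℕ) : ℕ := n - i / 2

/-- ℕ-indexed processing times -/
noncomputable def natQ (n : ℕ) (p : Fin (2*n) → ℝ) (i : ℕ) : ℝ :=
  if h : i < 2*n then p ⟨i,h⟩ else 0

lemma sum_univ_mul (n : ℕ) (F : Fin (2*n) → ℕ) (p : Fin (2*n) → ℝ) :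
    ∑ j : Fin (2*n), (F j : ℝ) * p j
      = ∑ i ∈ Finset.range (2*n),
          ((if h : i < 2*n then F ⟨i,h⟩ else 1 : ℕ) : ℝ) * natQ n p i := by
  rw [← Fin.sum_univ_eq_sum_range (fun i =>
    ((if h : i < 2*n then F ⟨i,h⟩ else 1 : ℕ) : ℝ) * natQ n p i) (2*n)]
  apply Finset.sum_congr rfl
  intro j _
  simp only [natQ, j.isLt, dif_pos, Fin.eta]

/-- Core result: in any schedule on 2 machines whose total completion time is at most
that of the canonical schedule (for strictly increasing positive processing times), the
positional weights agree with the canonical ones. -/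
theorem weights_eq_canonical (n : ℕ) (p : Fin (2*n) → ℝ)
    (pmono : ∀ s t : Fin (2*n), (s : ℕ) < (t : ℕ) → p s < p t)
    (ppos : ∀ s : Fin (2*n), 0 < p s)
    (σ : Schedule (Fin (2*n)) 2)
    (hle : σ.totalC p (fun _ => 1) ≤ (canonSched n).totalC p (fun _ => 1)) :
    ∀ j : Fin (2*n), σ.load (σ.mach j) + 1 - σ.pos j = n - (j : ℕ) / 2 := by
  -- total completion times in terms of ℕ-indexed data
  have hσsum : σ.totalC p (fun _ => 1)
      = ∑ i ∈ Finset.range (2*n), (natW n σ i : ℝ) * natQ n p i := by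
    rw [Schedule.totalC_eq, sum_univ_mul n (fun j => σ.load (σ.mach j) + 1 - σ.pos j) p]
    rfl
  have hcanon : (canonSched n).totalC p (fun _ => 1)
      = ∑ i ∈ Finset.range (2*n), (natC n i : ℝ) * natQ n p i := by
    rw [Schedule.totalC_eq, sum_univ_mul n
      (fun j => (canonSched n).load ((canonSched n).mach j) + 1 - (canonSched n).pos j) p]
    apply Finset.sum_congr rfl
    intro i hi
    rw [Finset.mem_range] at hi
    rw [dif_pos hi]
    congr 1
    rw [canonSched_load, canonSched_pos, natC]
    show ((n + 1 - (i / 2 + 1) : ℕ) : ℝ) = ((n - i / 2 : ℕ) : ℝ)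
    norm_cast
    omega
  -- fibers of natW on range (2n) have size ≤ 2
  have hfib : ∀ t, ((Finset.range (2*n)).filter fun i => natW n σ i = t).card ≤ 2 := by
    intro t
    have himg : ((Finset.range (2*n)).filter fun i => natW n σ i = t)
        = ((Finset.univ.filter fun j : Fin (2*n) =>
            σ.load (σ.mach j) + 1 - σ.pos j = t)).image Fin.val := by
      ext i
      simp only [Finset.mem_filter, Finset.mem_range, Finset.mem_image, Finset.mem_univ,
        true_and]
      constructor
      · rintro ⟨hi, hfi⟩
        refine ⟨⟨i, hi⟩, ?_, rfl⟩
        rw [natW, dif_pos hi] at hfi; exact hfi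
      · rintro ⟨j, hj, rfl⟩
        refine ⟨j.isLt, ?_⟩
        rw [natW, dif_pos j.isLt]
        simpa using hj
    rw [himg, Finset.card_image_of_injective _ Fin.val_injective]
    have hinj : Set.InjOn σ.mach (Finset.univ.filter fun j : Fin (2*n) =>
        σ.load (σ.mach j) + 1 - σ.pos j = t) := by
      intro x hx y hy hxy
      simp only [Finset.coe_filter, Set.mem_setOf_eq] at hx hy
      apply σ.inj x y hxy
      have h1 := σ.pos_le_load x
      have h2 := σ.pos_le_load y
      have h3 := σ.pos_pos x
      have h4 := σ.pos_pos y
      rw [hxy] at hx h1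
      omega
    calc ((Finset.univ.filter fun j : Fin (2*n) =>
          σ.load (σ.mach j) + 1 - σ.pos j = t)).card
        ≤ (Finset.univ : Finset (Fin 2)).card := Finset.card_le_card_of_injOn σ.mach
          (fun _ _ => Finset.mem_univ _) hinj
      _ = 2 := by simp
  -- natW ≥ 1 on range (2n)
  have hf1 : ∀ i < 2*n, 1 ≤ natW n σ i := by
    intro i hi
    rw [natW, dif_pos hi]
    have := σ.pos_le_load (⟨i, hi⟩ : Fin (2*n))
    have := σ.pos_pos (⟨i, hi⟩ : Fin (2*n))
    omega
  -- tail sums condition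
  have hT : ∀ i, ∑ j ∈ Finset.Ico i (2*n), natC n j
      ≤ ∑ j ∈ Finset.Ico i (2*n), natW n σ j := by
    intro i
    rcases Nat.lt_or_ge i (2*n) with hi | hi
    · have hB : ∑ j ∈ Finset.Ico i (2*n), natC n j = minSum (2*n - i) := by
        simp only [natC]; exact lemB n i (by omega)
      have hA' : minSum (2*n - i) ≤ ∑ j ∈ Finset.Ico i (2*n), natW n σ j := by
        apply lemA (2*n) (natW n σ) hf1 hfib (2*n - i)
        · intro x hx
          rw [Finset.mem_Ico] at hx
          exact Finset.mem_range.mpr hx.2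
        · rw [Nat.card_Ico]
      omega
    · rw [Finset.Ico_eq_empty (by omega)]
      simp
  -- strict monotonicity / positivity of natQ
  have hqmono : ∀ i, i + 1 < 2*n → natQ n p i < natQ n p (i + 1) := by
    intro i hi
    rw [natQ, natQ, dif_pos hi, dif_pos (by omega : i < 2*n)]
    exact pmono _ _ (by simp)
  have hq0 : ∀ i < 2*n, 0 < natQ n p i := by
    intro i hi
    rw [natQ, dif_pos hi]
    exact ppos _
  have hle' : ∑ j ∈ Finset.Ico 0 (2*n), (natW n σ j : ℝ) * natQ n p j
      ≤ ∑ j ∈ Finset.Ico 0 (2*n), (natC n j : ℝ) * natQ n p j := by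
    rw [← Finset.range_eq_Ico, ← hσsum, ← hcanon]
    exact hle
  intro j
  have := (lemC (2*n) (natQ n p) (natW n σ) (natC n) hqmono hq0 hT 0 (Nat.zero_le _)).2
    hle' (j : ℕ) (Finset.mem_Ico.mpr ⟨Nat.zero_le _, j.isLt⟩)
  rw [natW, natC, dif_pos j.isLt] at this
  simpa using this

/-- In every schedule of the `2n` Even-Odd-Partition jobs on two
identical machines minimizing `Σ_j C_j`, each machine processes exactly `n` jobs, and
for every position `k` (1-based) the two jobs placed in position `k` on the two machines
are exactly `J_{2k−1}` and `J_{2k}` (0-based: indices `2k` and `2k+1` for position `k+1`). -/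
theorem optimal_EOP_schedule_structure
    (n : ℕ) (a : Fin (2 * n) → ℕ) (A : ℕ)
    (ha_pos : ∀ j, 0 < a j) (ha_mono : StrictMono a)
    (hA : 2 * A = ∑ j, a j)
    (σ : Schedule (Fin (2 * n)) 2)
    (hopt : ∀ τ : Schedule (Fin (2 * n)) 2,
        σ.totalC (procEOP n A a) (fun _ => 1) ≤ τ.totalC (procEOP n A a) (fun _ => 1)) :
    (∀ i : Fin 2, σ.load i = n) ∧
    ∀ k : Fin n,
      Finset.univ.filter (fun j => σ.pos j = (k : ℕ) + 1)
        = ({⟨2 * (k : ℕ), by omega⟩, ⟨2 * (k : ℕ) + 1, by omega⟩} : Finset (Fin (2 * n))) := by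
  have pmono : ∀ s t : Fin (2*n), (s : ℕ) < (t : ℕ) → procEOP n A a s < procEOP n A a t := by
    intro s t hst
    simp only [procEOP]
    have h1 : a s < a t := ha_mono (Fin.lt_def.mpr hst)
    have h2 : 2 * ((s : ℕ) / 2) * A ≤ 2 * ((t : ℕ) / 2) * A :=
      Nat.mul_le_mul_right A (by omega)
    exact_mod_cast Nat.add_lt_add_of_le_of_lt h2 h1
  have ppos : ∀ s : Fin (2*n), 0 < procEOP n A a s := by
    intro s
    simp only [procEOP]
    have := ha_pos s
    exact_mod_cast Nat.lt_of_lt_of_le this (Nat.le_add_left _ _)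
  have hweq := weights_eq_canonical n (procEOP n A a) pmono ppos σ (hopt (canonSched n))
  rcases Nat.eq_zero_or_pos n with hn0 | hn1
  · subst hn0
    constructor
    · intro i
      have hcard0 := Finset.card_filter_le (Finset.univ : Finset (Fin (2*0)))
        (fun j => σ.mach j = i)
      rw [Finset.card_univ, Fintype.card_fin] at hcard0
      rw [Schedule.load]
      omega
    · intro k
      exact absurd k.isLt (by omega)
  · have hj0lt : (0 : ℕ) < 2*n := by omega
    have hj1lt : (1 : ℕ) < 2*n := by omega
    have hw0 : σ.load (σ.mach ⟨0, hj0lt⟩) + 1 - σ.pos ⟨0, hj0lt⟩ = n := by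
      have h := hweq ⟨0, hj0lt⟩
      simp only [Fin.val_mk] at h
      omega
    have hw1 : σ.load (σ.mach ⟨1, hj1lt⟩) + 1 - σ.pos ⟨1, hj1lt⟩ = n := by
      have h := hweq ⟨1, hj1lt⟩
      simp only [Fin.val_mk] at h
      omega
    have hload0 : n ≤ σ.load (σ.mach ⟨0, hj0lt⟩) := by
      have h1 := σ.pos_pos (⟨0, hj0lt⟩ : Fin (2*n))
      have h2 := σ.pos_le_load (⟨0, hj0lt⟩ : Fin (2*n))
      omega
    have hload1 : n ≤ σ.load (σ.mach ⟨1, hj1lt⟩) := by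
      have h1 := σ.pos_pos (⟨1, hj1lt⟩ : Fin (2*n))
      have h2 := σ.pos_le_load (⟨1, hj1lt⟩ : Fin (2*n))
      omega
    have hmne : σ.mach ⟨0, hj0lt⟩ ≠ σ.mach ⟨1, hj1lt⟩ := by
      intro heq
      have h1 := σ.pos_le_load (⟨0, hj0lt⟩ : Fin (2*n))
      have h2 := σ.pos_le_load (⟨1, hj1lt⟩ : Fin (2*n))
      have h3 := σ.pos_pos (⟨0, hj0lt⟩ : Fin (2*n))
      have h4 := σ.pos_pos (⟨1, hj1lt⟩ : Fin (2*n))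
      rw [heq] at h1 hw0
      have hpos : σ.pos (⟨0, hj0lt⟩ : Fin (2*n)) = σ.pos (⟨1, hj1lt⟩ : Fin (2*n)) := by
        omega
      have h5 := σ.inj _ _ heq hpos
      have h6 : (0 : ℕ) = 1 := congrArg Fin.val h5
      omega
    have hsumload : σ.load 0 + σ.load 1 = 2*n := by
      have h := Finset.card_eq_sum_card_fiberwise
        (f := σ.mach) (s := (Finset.univ : Finset (Fin (2*n))))
        (t := (Finset.univ : Finset (Fin 2))) (fun x _ => Finset.mem_univ _)
      rw [Finset.card_univ, Fintype.card_fin, Fin.sum_univ_two] at h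
      exact h.symm
    have hmach01 : ∀ j : Fin (2*n), σ.mach j = 0 ∨ σ.mach j = 1 := by
      intro j
      have hb : ((σ.mach j : Fin 2) : ℕ) < 2 := (σ.mach j).isLt
      rcases Nat.lt_or_ge ((σ.mach j : Fin 2) : ℕ) 1 with h | h
      · left; apply Fin.ext; simpa using (by omega : ((σ.mach j : Fin 2) : ℕ) = 0)
      · right; apply Fin.ext; simpa using (by omega : ((σ.mach j : Fin 2) : ℕ) = 1)
    have hloadall : ∀ i : Fin 2, σ.load i = n := by
      have h0 := hmach01 ⟨0, hj0lt⟩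
      have h1 := hmach01 ⟨1, hj1lt⟩
      have hload0' : σ.load 0 = n ∧ σ.load 1 = n := by
        rcases h0 with h0 | h0 <;> rcases h1 with h1 | h1 <;>
          [skip; skip; skip; skip]
        · exact absurd (h0.trans h1.symm) hmne
        · rw [h0] at hload0; rw [h1] at hload1; omega
        · rw [h0] at hload0; rw [h1] at hload1; omega
        · exact absurd (h0.trans h1.symm) hmne
      intro i
      have hb : ((i : Fin 2) : ℕ) < 2 := i.isLt
      rcases Nat.lt_or_ge ((i : Fin 2) : ℕ) 1 with h | h
      · have : i = 0 := by apply Fin.ext; simpa using (by omega : ((i : Fin 2) : ℕ) = 0)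
        rw [this]; exact hload0'.1
      · have : i = 1 := by apply Fin.ext; simpa using (by omega : ((i : Fin 2) : ℕ) = 1)
        rw [this]; exact hload0'.2
    refine ⟨hloadall, ?_⟩
    have hpos : ∀ j : Fin (2*n), σ.pos j = (j : ℕ) / 2 + 1 := by
      intro j
      have h1 := hweq j
      rw [hloadall (σ.mach j)] at h1
      have h2 := σ.pos_pos j
      have h3 := σ.pos_le_load j
      rw [hloadall (σ.mach j)] at h3
      have h4 : (j : ℕ) < 2 * n := j.isLt
      omega
    intro k
    ext j
    simp only [Finset.mem_filter, Finset.mem_univ, true_and, Finset.mem_insert,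
      Finset.mem_singleton]
    rw [hpos j]
    constructor
    · intro h
      have h5 : (j : ℕ) = 2 * (k : ℕ) ∨ (j : ℕ) = 2 * (k : ℕ) + 1 := by omega
      rcases h5 with h5 | h5
      · left; apply Fin.ext; simpa using h5
      · right; apply Fin.ext; simpa using h5
    · intro h
      rcases h with rfl | rfl
      · show 2 * (k : ℕ) / 2 + 1 = (k : ℕ) + 1
        omega
      · show (2 * (k : ℕ) + 1) / 2 + 1 = (k : ℕ) + 1
        omega
end

section
/- Consider N jobs with positive processing times p_1,…,p_N, m uniform machines with positive speeds V_1,…,V_m, and an integer n ≤ N. For an n-element subset S of jobs, let OPT(S) denote the minimum of Σ_{j∈S} C_j over all schedules of the jobs of S on the m machines. Then OPT(S) ≤ OPT(S*) for every n-element subset S, where S* is the set of the n jobs with the largest processing times; that is, in the adversarial bilevel problem Q|ADV-n|Σ_j C_j^F, the leader maximizes the follower's optimal total completion time by selecting the n jobs with the largest processing times (and the follower's optimum on that set is achieved by a schedule pairing the k-th largest processing time with the k-th smallest positional weight). -/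
open Finset

namespace Schedule

variable {J K : Type} {m : ℕ}

theorem exists_pos_eq (σ : Schedule J m) (j : J) {k : ℕ} (hk₁ : 1 ≤ k) (hk : k ≤ σ.pos j) :
    ∃ j', σ.mach j' = σ.mach j ∧ σ.pos j' = k := by
  induction hk using Nat.decreasingInduction with
  | self => exact ⟨j, rfl, rfl⟩
  | of_succ k _ ih =>
    obtain ⟨j', hj'm, hj'p⟩ := ih (by omega)
    obtain ⟨j'', hj''m, hj''p⟩ := σ.contiguous j' (by omega)
    exact ⟨j'', hj''m.trans hj'm, by omega⟩

def reindex (σ : Schedule K m) (f : J ≃ K) : Schedule J m where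
  mach := σ.mach ∘ f
  pos := σ.pos ∘ f
  pos_pos j := σ.pos_pos (f j)
  inj _ _ hm hp := f.injective (σ.inj _ _ hm hp)
  contiguous j hj := by
    obtain ⟨k, hkm, hkp⟩ := σ.contiguous (f j) hj
    exact ⟨f.symm k, by simpa using hkm, by simpa using hkp⟩

variable [Fintype J] [Fintype K]

theorem card_filter_pos_lt (σ : Schedule J m) (j : J) :
    #{j' | σ.mach j' = σ.mach j ∧ σ.pos j' < σ.pos j} = σ.pos j - 1 := by
  rw [← Nat.card_Ico]
  refine card_bij (fun j' _ => σ.pos j') ?_ ?_ ?_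
  · intro j' hj'
    simp only [mem_filter, mem_univ, true_and] at hj'
    exact mem_Ico.2 ⟨σ.pos_pos j', hj'.2⟩
  · intro a ha b hb hab
    simp only [mem_filter, mem_univ, true_and] at ha hb
    exact σ.inj a b (ha.1.trans hb.1.symm) hab
  · intro k hk
    obtain ⟨hk₁, hk⟩ := mem_Ico.1 hk
    obtain ⟨j', hj'm, hj'p⟩ := σ.exists_pos_eq j hk₁ hk.le
    exact ⟨j', by simp [hj'm, hj'p, hk], hj'p⟩

theorem card_filter_pos_ge_add_pos (σ : Schedule J m) (j : J) :
    #{j' | σ.mach j' = σ.mach j ∧ σ.pos j ≤ σ.pos j'} + σ.pos j = σ.load (σ.mach j) + 1 := by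
  have hsplit := card_filter_add_card_filter_not (s := {j' | σ.mach j' = σ.mach j})
    (fun j' => σ.pos j ≤ σ.pos j')
  simp only [filter_filter, not_le] at hsplit
  rw [load, ← hsplit, card_filter_pos_lt]
  have := σ.pos_pos j
  omega

theorem pw_eq_card_div (σ : Schedule J m) (V : Fin m → ℝ) (j : J) :
    σ.pw V j = #{j' | σ.mach j' = σ.mach j ∧ σ.pos j ≤ σ.pos j'} / V (σ.mach j) := by
  have := congrArg (Nat.cast (R := ℝ)) (σ.card_filter_pos_ge_add_pos j)
  push_cast at this
  rw [pw]
  congr 1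
  linarith

theorem pw_nonneg (σ : Schedule J m) {V : Fin m → ℝ} (hV : ∀ i, 0 < V i) (j : J) :
    0 ≤ σ.pw V j := by
  rw [pw_eq_card_div]
  exact div_nonneg (Nat.cast_nonneg _) (hV _).le

/-- Job `j'` contributes `p j' / V` to the completion time of each job at or after it on its
machine, and `pw` counts these jobs. -/
theorem totalC_eq_sum_pw_mul (σ : Schedule J m) (p : J → ℝ) (V : Fin m → ℝ) :
    σ.totalC p V = ∑ j, σ.pw V j * p j := by
  classical
  simp only [totalC, compl, sum_div, pw_eq_card_div]
  rw [sum_comm' (t' := univ)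
    (s' := fun j' => {j | σ.mach j = σ.mach j' ∧ σ.pos j' ≤ σ.pos j})]
  · refine sum_congr rfl fun j' _ => ?_
    rw [sum_congr rfl fun j hj => by rw [(mem_filter.1 hj).2.1], sum_const,
      nsmul_eq_mul]
    ring
  · intro j j'
    simp only [mem_filter, mem_univ, true_and]
    grind

theorem load_reindex (σ : Schedule K m) (f : J ≃ K) (i : Fin m) :
    (σ.reindex f).load i = σ.load i :=
  card_equiv f fun _ => by simp only [mem_filter, mem_univ, true_and]; rfl

theorem pw_reindex (σ : Schedule K m) (f : J ≃ K) (V : Fin m → ℝ) (j : J) :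
    (σ.reindex f).pw V j = σ.pw V (f j) := by
  rw [pw, load_reindex]
  rfl

theorem totalC_reindex (σ : Schedule K m) (f : J ≃ K) (p : J → ℝ) (V : Fin m → ℝ) :
    (σ.reindex f).totalC p V = ∑ j, σ.pw V (f j) * p j := by
  simp only [totalC_eq_sum_pw_mul, pw_reindex]

theorem totalC_reindex_le (σ : Schedule K m) (f : J ≃ K) {p : J → ℝ} {q : K → ℝ}
    {V : Fin m → ℝ} (hV : ∀ i, 0 < V i) (hpq : ∀ j, p j ≤ q (f j)) :
    (σ.reindex f).totalC p V ≤ σ.totalC q V := by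
  rw [totalC_reindex, totalC_eq_sum_pw_mul, ← f.sum_comp]
  exact sum_le_sum fun j _ => mul_le_mul_of_nonneg_left (hpq j) (σ.pw_nonneg hV _)

/-- By the rearrangement inequality, giving the `k`-th longest job the `k`-th smallest weight
of `σ` cannot increase the cost. -/
theorem exists_totalC_le_monotone_pw {n : ℕ} (σ : Schedule J m) (p : J → ℝ) (V : Fin m → ℝ)
    (e : Fin n ≃ J) (hp : Antitone (p ∘ e)) :
    ∃ τ : Schedule J m, τ.totalC p V ≤ σ.totalC p V ∧ Monotone (τ.pw V ∘ e) := by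
  set w := σ.pw V ∘ e
  set c := Tuple.sort w
  have hτ : ∀ k, (σ.reindex (e.symm.trans (c.trans e))).pw V (e k) = w (c k) := by
    simp [pw_reindex, w]
  refine ⟨σ.reindex (e.symm.trans (c.trans e)), ?_, fun k l hkl => ?_⟩
  · have hanti : Antivary (p ∘ e) (w ∘ c) := hp.antivary (Tuple.monotone_sort w)
    calc _ = ∑ k, (p ∘ e) k * (w ∘ c) k := by
          rw [totalC_eq_sum_pw_mul, ← e.sum_comp]
          simp only [hτ, Function.comp_apply, mul_comm]
      _ ≤ ∑ k, (p ∘ e) k * (w ∘ c) (c.symm k) := hanti.sum_mul_le_sum_mul_comp_perm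
      _ = σ.totalC p V := by
          rw [totalC_eq_sum_pw_mul, ← e.sum_comp]
          simp only [Function.comp_apply, Equiv.apply_symm_apply, w, mul_comm]
  · simpa only [Function.comp_apply, hτ] using Tuple.monotone_sort w hkl

end Schedule

theorem exists_equiv_fin_antitone {α : Type*} [Fintype α] {n : ℕ} (hn : Fintype.card α = n)
    (p : α → ℝ) : ∃ e : Fin n ≃ α, Antitone (p ∘ e) := by
  set e₀ := (Fintype.equivFinOfCardEq hn).symm
  refine ⟨(Tuple.sort (OrderDual.toDual ∘ p ∘ e₀)).trans e₀, ?_⟩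
  exact monotone_toDual_comp_iff.1 (Tuple.monotone_sort (OrderDual.toDual ∘ p ∘ e₀))

/-- Elements shared by `s` and `t` are matched with themselves; every other element of `s` lies
outside `t` and is matched with some element of `t`, which dominates it. -/
theorem exists_equiv_forall_le_of_card_eq {α : Type*} [DecidableEq α] {s t : Finset α}
    (p : α → ℝ) (hst : #s = #t) (ht : ∀ u ∈ t, ∀ v ∉ t, p v ≤ p u) :
    ∃ f : s ≃ t, ∀ j : s, p j ≤ p (f j) := by
  obtain ⟨f, hf⟩ := exists_equiv_extend_of_card_eq (s := {j : s | (j : α) ∈ t})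
    (f := Subtype.val) (by simpa using hst) (by intro; simp +contextual)
    Subtype.val_injective.injOn
  refine ⟨f, fun j => ?_⟩
  by_cases hj : (j : α) ∈ t
  · rw [hf j (by simpa using hj)]
  · exact ht _ (f j).2 _ hj

theorem adversarial_leader_selects_largest_jobs_general
    {N m n : ℕ} (p : Fin N → ℝ) (V : Fin m → ℝ)
    (hV : ∀ i, 0 < V i)
    (Sstar S : Finset (Fin N)) (hcardstar : Sstar.card = n) (hcard : S.card = n)
    (hmax : ∀ u ∈ Sstar, ∀ v ∉ Sstar, p v ≤ p u)
    (v v' : ℝ)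
    (hv2 : ∀ σ : Schedule (↥S) m, v ≤ σ.totalC (fun j => p j.1) V)
    (hv'1 : ∃ σ : Schedule (↥Sstar) m, σ.totalC (fun j => p j.1) V = v')
    (hv'2 : ∀ σ : Schedule (↥Sstar) m, v' ≤ σ.totalC (fun j => p j.1) V) :
    v ≤ v' ∧
    ∃ σ : Schedule (↥Sstar) m, σ.totalC (fun j => p j.1) V = v' ∧
      ∃ e : Fin n ≃ ↥Sstar,
        (∀ k l : Fin n, k ≤ l → p (e l).1 ≤ p (e k).1) ∧
        (∀ k l : Fin n, k ≤ l → σ.pw V (e k) ≤ σ.pw V (e l)) := by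
  obtain ⟨σ₀, hσ₀⟩ := hv'1
  obtain ⟨e, he⟩ := exists_equiv_fin_antitone ((Fintype.card_coe Sstar).trans hcardstar)
    fun j : Sstar => p j
  obtain ⟨σ, hσσ₀, hσe⟩ := σ₀.exists_totalC_le_monotone_pw _ V e he
  have hσ : σ.totalC (fun j => p j.1) V = v' := le_antisymm (hσ₀ ▸ hσσ₀) (hv'2 σ)
  obtain ⟨f, hf⟩ := exists_equiv_forall_le_of_card_eq p (hcard.trans hcardstar.symm) hmax
  refine ⟨?_, σ, hσ, e, fun k l hkl => he hkl, fun k l hkl => hσe hkl⟩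
  calc v ≤ (σ.reindex f).totalC (fun j => p j.1) V := hv2 _
    _ ≤ σ.totalC (fun j => p j.1) V := σ.totalC_reindex_le f hV hf
    _ = v' := hσ

/-- (Adversarial bilevel problem `Q|ADV-n|Σ_j C_j^F`.) If `S*` is the
set of the `n` jobs with the largest processing times, then for every `n`-element subset
`S` of jobs, the follower's optimal total completion time on `S` is at most that on
`S*`; moreover the follower's optimum on `S*` is achieved by a schedule pairing the
`k`-th largest processing time with the `k`-th smallest positional weight. -/
theorem adversarial_leader_selects_largest_jobs
    {N m n : ℕ} (p : Fin N → ℝ) (V : Fin m → ℝ)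
    (hp : ∀ j, 0 < p j) (hV : ∀ i, 0 < V i) (hm : 0 < m) (hn : n ≤ N)
    (Sstar S : Finset (Fin N)) (hcardstar : Sstar.card = n) (hcard : S.card = n)
    (hmax : ∀ u ∈ Sstar, ∀ v ∉ Sstar, p v ≤ p u)
    (v v' : ℝ)
    (hv1 : ∃ σ : Schedule (↥S) m, σ.totalC (fun j => p j.1) V = v)
    (hv2 : ∀ σ : Schedule (↥S) m, v ≤ σ.totalC (fun j => p j.1) V)
    (hv'1 : ∃ σ : Schedule (↥Sstar) m, σ.totalC (fun j => p j.1) V = v')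
    (hv'2 : ∀ σ : Schedule (↥Sstar) m, v' ≤ σ.totalC (fun j => p j.1) V) :
    v ≤ v' ∧
    ∃ σ : Schedule (↥Sstar) m, σ.totalC (fun j => p j.1) V = v' ∧
      ∃ e : Fin n ≃ ↥Sstar,
        (∀ k l : Fin n, k ≤ l → p (e l).1 ≤ p (e k).1) ∧
        (∀ k l : Fin n, k ≤ l → σ.pw V (e k) ≤ σ.pw V (e l)) :=
  adversarial_leader_selects_largest_jobs_general p V hV Sstar S hcardstar hcard hmax v v' hv2 hv'1
    hv'2
end
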